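/- For Re(ν) > −1/2 and A = Re(ν), the Bessel function of the first kind satisfies J_{A+2iv}(y) ≪_A (y/(1+|v|))^A · exp(π|v|) for all y > 0 and v ∈ ℝ. -/

import Mathlib

open Complex

/-- The Bessel function of the first kind of complex order `ν` with `Re ν > −1/2`,
via the Poisson integral representation. -/
noncomputable def besselJ (ν : ℂ) (y : ℝ) : ℂ :=
  2 * ((y / 2 : ℝ) : ℂ) ^ ν / (Complex.Gamma (ν + 1 / 2) * Complex.Gamma (1 / 2)) *
    ∫ θ in (0 : ℝ)..(Real.pi / 2),
      ((Real.sin θ : ℂ)) ^ (2 * ν) * (Real.cos (y * Real.cos θ) : ℂ)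

open Real

section helpers

lemma arctan_nonneg' {x : ℝ} (hx : 0 ≤ x) : 0 ≤ Real.arctan x := by
  rw [← Real.arctan_zero]
  exact Real.arctan_strictMono.monotone hx

/-- `log (1+u²) ≤ 2 u arctan u` for `0 ≤ u`. -/
lemma log_le_arctan_aux {u : ℝ} (hu : 0 ≤ u) :
    Real.log (1 + u ^ 2) ≤ 2 * u * Real.arctan u := by
  rcases eq_or_lt_of_le hu with h | h
  · simp [← h]
  · -- MVT on [0, u] for h(x) = 2 x arctan x - log (1+x²)
    set g : ℝ → ℝ := fun x => 2 * x * Real.arctan x - Real.log (1 + x ^ 2) with hg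
    have hderiv : ∀ x : ℝ, HasDerivAt g (2 * Real.arctan x) x := by
      intro x
      have h1 : HasDerivAt (fun x : ℝ => 2 * x * Real.arctan x)
          (2 * Real.arctan x + 2 * x * (1 / (1 + x ^ 2))) x := by
        have := ((hasDerivAt_id x).const_mul 2).mul (Real.hasDerivAt_arctan x)
        refine this.congr_deriv ?_
        simp [id]
      have h2 : HasDerivAt (fun x : ℝ => Real.log (1 + x ^ 2))
          ((2 * x) / (1 + x ^ 2)) x := by
        have hx : (1 : ℝ) + x ^ 2 ≠ 0 := by positivity
        have hp : HasDerivAt (fun x : ℝ => 1 + x ^ 2) (2 * x) x := by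
          simpa using (hasDerivAt_pow 2 x).const_add 1
        have := (Real.hasDerivAt_log hx).comp x hp
        simpa [Function.comp_def, div_eq_inv_mul] using this
      have := h1.sub h2
      refine this.congr_deriv ?_
      have hx : (1 : ℝ) + x ^ 2 ≠ 0 := by positivity
      field_simp
      ring
    obtain ⟨c, hc, hc'⟩ := exists_hasDerivAt_eq_slope g (fun x => 2 * Real.arctan x) h
      (fun x _ => (hderiv x).continuousAt.continuousWithinAt) (fun x _ => hderiv x)
    have hg0 : g 0 = 0 := by simp [hg]
    have hcnn : 0 ≤ 2 * Real.arctan c := by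
      have := arctan_nonneg' hc.1.le
      linarith
    rw [hg0, sub_zero] at hc'
    have h0 : 0 ≤ g u / (u - 0) := hc' ▸ hcnn
    have hgu : 0 ≤ g u := by
      rcases div_nonneg_iff.mp h0 with ⟨h1, _⟩ | ⟨_, h2⟩
      · exact h1
      · nlinarith
    simp only [hg] at hgu
    linarith

noncomputable def ff (t x : ℝ) : ℝ := Real.log (x ^ 2 + t ^ 2) - 2 * Real.log x
noncomputable def dd (t x : ℝ) : ℝ := 2 * x / (x ^ 2 + t ^ 2) - 2 / x
noncomputable def FF (t x : ℝ) : ℝ :=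
  x * (Real.log (x ^ 2 + t ^ 2) - 2 * Real.log x) + 2 * |t| * Real.arctan (x / |t|)

lemma hasDerivAt_ff {t x : ℝ} (hx : 0 < x) : HasDerivAt (ff t) (dd t x) x := by
  have hx2 : x ^ 2 + t ^ 2 ≠ 0 := by positivity
  have hp : HasDerivAt (fun x : ℝ => x ^ 2 + t ^ 2) (2 * x) x := by
    simpa using (hasDerivAt_pow 2 x).add_const (t ^ 2)
  have h1 : HasDerivAt (fun x : ℝ => Real.log (x ^ 2 + t ^ 2)) ((x ^ 2 + t ^ 2)⁻¹ * (2 * x)) x :=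
    by simpa [Function.comp_def] using (Real.hasDerivAt_log hx2).comp x hp
  have h2 : HasDerivAt (fun x : ℝ => 2 * Real.log x) (2 * x⁻¹) x :=
    (Real.hasDerivAt_log hx.ne').const_mul 2
  have := h1.sub h2
  refine this.congr_deriv ?_
  unfold dd
  field_simp

lemma dd_mono {t x y : ℝ} (hx : 0 < x) (hxy : x ≤ y) : dd t x ≤ dd t y := by
  have hy : 0 < y := lt_of_lt_of_le hx hxy
  have hex : dd t x = -(2 * t ^ 2) / (x * (x ^ 2 + t ^ 2)) := by
    unfold dd; field_simp; ring
  have hey : dd t y = -(2 * t ^ 2) / (y * (y ^ 2 + t ^ 2)) := by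
    unfold dd; field_simp; ring
  rw [hex, hey, neg_div, neg_div, neg_le_neg_iff]
  apply div_le_div_of_nonneg_left (by positivity) (by positivity)
  nlinarith [mul_le_mul_of_nonneg_right hxy (sq_nonneg t), pow_le_pow_left₀ hx.le hxy 3]

lemma tangent_ff {t m x : ℝ} (hm : 0 < m) (hx : 0 < x) :
    ff t m + dd t m * (x - m) ≤ ff t x := by
  rcases lt_trichotomy x m with h | h | h
  · obtain ⟨c, hc, hc'⟩ := exists_hasDerivAt_eq_slope (ff t) (dd t) h
      (fun z hz => (hasDerivAt_ff (lt_of_lt_of_le hx hz.1)).continuousAt.continuousWithinAt)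
      (fun z hz => hasDerivAt_ff (lt_trans hx hz.1))
    have hcm : dd t c ≤ dd t m := dd_mono (lt_trans hx hc.1) hc.2.le
    rw [hc'] at hcm
    rw [div_le_iff₀ (by linarith)] at hcm
    linarith
  · simp [h]
  · obtain ⟨c, hc, hc'⟩ := exists_hasDerivAt_eq_slope (ff t) (dd t) h
      (fun z hz => (hasDerivAt_ff (lt_of_lt_of_le hm hz.1)).continuousAt.continuousWithinAt)
      (fun z hz => hasDerivAt_ff (lt_trans hm hz.1))
    have hcm : dd t m ≤ dd t c := dd_mono hm hc.1.le
    rw [hc'] at hcm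
    rw [le_div_iff₀ (by linarith)] at hcm
    linarith

lemma hasDerivAt_FF {t x : ℝ} (ht : t ≠ 0) (hx : 0 < x) : HasDerivAt (FF t) (ff t x) x := by
  have ht' : (0:ℝ) < |t| := abs_pos.mpr ht
  have hx2 : x ^ 2 + t ^ 2 ≠ 0 := by positivity
  have h1 : HasDerivAt (fun x : ℝ => x * (Real.log (x ^ 2 + t ^ 2) - 2 * Real.log x))
      (1 * (Real.log (x ^ 2 + t ^ 2) - 2 * Real.log x) + x * dd t x) x :=
    (hasDerivAt_id x).mul (hasDerivAt_ff hx)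
  have h2 : HasDerivAt (fun x : ℝ => 2 * |t| * Real.arctan (x / |t|))
      (2 * |t| * ((1 / (1 + (x / |t|) ^ 2)) * (1 / |t|))) x := by
    have ha : HasDerivAt (fun x : ℝ => x / |t|) (1 / |t|) x := by
      simpa using (hasDerivAt_id x).div_const |t|
    exact ((Real.hasDerivAt_arctan (x / |t|)).comp x ha).const_mul (2 * |t|)
  have := h1.add h2
  refine this.congr_deriv ?_
  unfold ff dd
  have h3 : 1 + (x / |t|) ^ 2 = (t ^ 2 + x ^ 2) / t ^ 2 := by
    rw [div_pow, _root_.sq_abs]; field_simp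
  rw [h3]
  field_simp
  ring

lemma FF_le {t x : ℝ} (ht : t ≠ 0) (hx : 0 < x) : FF t x ≤ π * |t| := by
  have ht' : (0:ℝ) < |t| := abs_pos.mpr ht
  set u := |t| / x with hu
  have hu0 : 0 < u := div_pos ht' hx
  have h1 : Real.log (x ^ 2 + t ^ 2) - 2 * Real.log x = Real.log (1 + u ^ 2) := by
    have : (1 : ℝ) + u ^ 2 = (x ^ 2 + t ^ 2) / x ^ 2 := by
      rw [hu, div_pow, _root_.sq_abs]; field_simp
    rw [this, Real.log_div (by positivity) (by positivity), Real.log_pow]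
    push_cast; ring
  have h2 : Real.log (1 + u ^ 2) ≤ 2 * u * Real.arctan u := log_le_arctan_aux hu0.le
  have h3 : Real.arctan (x / |t|) = π / 2 - Real.arctan u := by
    have : x / |t| = u⁻¹ := by rw [hu]; field_simp
    rw [this, Real.arctan_inv_of_pos hu0]
  unfold FF
  rw [h1, h3]
  have h4 : x * Real.log (1 + u ^ 2) ≤ 2 * |t| * Real.arctan u := by
    calc x * Real.log (1 + u ^ 2) ≤ x * (2 * u * Real.arctan u) := by
          apply mul_le_mul_of_nonneg_left h2 hx.le
      _ = 2 * (x * u) * Real.arctan u := by ring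
      _ = 2 * |t| * Real.arctan u := by rw [hu]; field_simp
  nlinarith [Real.pi_pos]

lemma step_ff {t m : ℝ} (ht : t ≠ 0) (hm : 1 ≤ m) :
    ff t m ≤ FF t (m + 1/2) - FF t (m - 1/2) := by
  have ha : (0:ℝ) < m - 1/2 := by linarith
  have hab : m - 1/2 ≤ m + 1/2 := by linarith
  have hposIcc : ∀ x ∈ Set.Icc (m - 1/2) (m + 1/2), (0:ℝ) < x := fun x hx => lt_of_lt_of_le ha hx.1
  have hposuIcc : ∀ x ∈ Set.uIcc (m - 1/2) (m + 1/2), (0:ℝ) < x := by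
    rw [Set.uIcc_of_le hab]; exact hposIcc
  have hcont : ContinuousOn (ff t) (Set.uIcc (m - 1/2) (m + 1/2)) :=
    fun x hx => ((hasDerivAt_ff (hposuIcc x hx)).continuousAt).continuousWithinAt
  have hint : IntervalIntegrable (ff t) MeasureTheory.volume (m - 1/2) (m + 1/2) :=
    hcont.intervalIntegrable
  have hFTC : ∫ x in (m - 1/2)..(m + 1/2), ff t x = FF t (m + 1/2) - FF t (m - 1/2) :=
    intervalIntegral.integral_eq_sub_of_hasDerivAt
      (fun x hx => hasDerivAt_FF ht (hposuIcc x hx)) hint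
  -- lower bound by tangent line
  have hlin : ∫ x in (m - 1/2)..(m + 1/2), (ff t m + dd t m * (x - m)) = ff t m := by
    have hG : ∀ x ∈ Set.uIcc (m - 1/2) (m + 1/2),
        HasDerivAt (fun x => ff t m * x + dd t m * (x - m)^2 / 2)
          (ff t m + dd t m * (x - m)) x := by
      intro x _
      have h1 : HasDerivAt (fun x : ℝ => ff t m * x) (ff t m) x := by
        simpa using (hasDerivAt_id x).const_mul (ff t m)
      have h2 : HasDerivAt (fun x : ℝ => dd t m * (x - m)^2 / 2) (dd t m * (x - m)) x := by
        have : HasDerivAt (fun x : ℝ => (x - m)^2) (2 * (x - m)) x := by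
          simpa [Pi.pow_def] using ((hasDerivAt_id x).sub_const m).pow 2
        have := (this.const_mul (dd t m)).div_const 2
        refine this.congr_deriv ?_; ring
      exact h1.add h2
    have hcl : ContinuousOn (fun x => ff t m + dd t m * (x - m)) (Set.uIcc (m - 1/2) (m + 1/2)) :=
      (continuous_const.add (continuous_const.mul (continuous_id.sub continuous_const))).continuousOn
    rw [intervalIntegral.integral_eq_sub_of_hasDerivAt hG hcl.intervalIntegrable]
    ring
  have hmono : ∫ x in (m - 1/2)..(m + 1/2), (ff t m + dd t m * (x - m))
      ≤ ∫ x in (m - 1/2)..(m + 1/2), ff t x := by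
    apply intervalIntegral.integral_mono_on hab
      ((continuous_const.add (continuous_const.mul
        (continuous_id.sub continuous_const))).intervalIntegrable _ _)
      hint
    intro x hx
    exact tangent_ff (by linarith) (hposIcc x hx)
  rw [← hFTC, ← hlin] at *
  linarith [hmono]

lemma sum_ff_bound {σ : ℝ} (hσ : 1 ≤ σ) (t : ℝ) (n : ℕ) :
    ∑ j ∈ Finset.range (n + 1), ff t (σ + j)
      ≤ π * |t| - (2 * σ - 1) * Real.log (1 + |t|) +
        (σ - 1/2) * Real.log (2 * (max 1 (σ - 1/2)) ^ 2) := by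
  have ha : (0:ℝ) < σ - 1/2 := by linarith
  have hM : (1:ℝ) ≤ max 1 (σ - 1/2) := le_max_left _ _
  have hC : 0 ≤ (σ - 1/2) * Real.log (2 * (max 1 (σ - 1/2)) ^ 2) := by
    apply mul_nonneg ha.le
    apply Real.log_nonneg
    nlinarith
  rcases eq_or_ne t 0 with rfl | ht
  · have : ∀ j : ℕ, ff 0 (σ + j) = 0 := by
      intro j
      have hsj : (0:ℝ) < σ + j := by positivity
      unfold ff
      have h0 : (σ + (j:ℝ)) ^ 2 + (0:ℝ) ^ 2 = (σ + (j:ℝ)) ^ 2 := by ring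
      rw [h0, Real.log_pow]
      push_cast
      ring
    simp only [this, Finset.sum_const_zero]
    simp only [abs_zero, mul_zero, add_zero, Real.log_one]
    linarith
  · -- telescoping
    have htel : ∑ j ∈ Finset.range (n + 1), ff t (σ + j)
        ≤ FF t (σ + n + 1/2) - FF t (σ - 1/2) := by
      have hstep : ∀ j ∈ Finset.range (n + 1),
          ff t (σ + j) ≤ FF t (σ + (j+1) - 1/2) - FF t (σ + j - 1/2) := by
        intro j _
        have h1 : (1:ℝ) ≤ σ + j := by
          have : (0:ℝ) ≤ j := Nat.cast_nonneg j
          linarith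
        have := step_ff ht h1
        convert this using 3 <;> push_cast <;> ring
      calc ∑ j ∈ Finset.range (n + 1), ff t (σ + j)
          ≤ ∑ j ∈ Finset.range (n + 1), (FF t (σ + (j+1) - 1/2) - FF t (σ + j - 1/2)) :=
            Finset.sum_le_sum hstep
        _ = FF t (σ + (n+1) - 1/2) - FF t (σ + 0 - 1/2) := by
            have := Finset.sum_range_sub (fun j : ℕ => FF t (σ + j - 1/2)) (n + 1)
            push_cast at this ⊢
            convert this using 2
        _ = FF t (σ + n + 1/2) - FF t (σ - 1/2) := by norm_num; ring_nf
    have hup : FF t (σ + n + 1/2) ≤ π * |t| := by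
      apply FF_le ht
      have : (0:ℝ) ≤ n := Nat.cast_nonneg n
      linarith
    have hlow : 2 * (σ - 1/2) * Real.log (1 + |t|) - (σ - 1/2) * Real.log (2 * (max 1 (σ - 1/2)) ^ 2) ≤ FF t (σ - 1/2) := by
      have ht' : (0:ℝ) < |t| := abs_pos.mpr ht
      have harct : 0 ≤ 2 * |t| * Real.arctan ((σ - 1/2) / |t|) := by
        apply mul_nonneg (by positivity)
        rw [← Real.arctan_zero]
        exact Real.arctan_strictMono.monotone (by positivity)
      have hkey : Real.log ((1 + |t|)^2 / (2 * (max 1 (σ - 1/2)) ^ 2)) ≤ Real.log ((σ - 1/2) ^ 2 + t ^ 2) - 2 * Real.log (σ - 1/2) := by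
        have he : Real.log ((σ - 1/2) ^ 2 + t ^ 2) - 2 * Real.log (σ - 1/2) = Real.log (((σ - 1/2) ^ 2 + t ^ 2) / (σ - 1/2) ^ 2) := by
          rw [Real.log_div (by positivity) (by positivity), Real.log_pow]
          push_cast; ring
        rw [he]
        apply Real.log_le_log (by positivity)
        rw [div_le_div_iff₀ (by positivity) (by positivity)]
        have h1 : σ - 1/2 ≤ max 1 (σ - 1/2) := le_max_right _ _
        have h2 : (1:ℝ) ≤ max 1 (σ - 1/2) := le_max_left _ _
        have ha2 : (σ - 1/2)^2 ≤ (max 1 (σ - 1/2))^2 := by nlinarith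
        have hM2 : (1:ℝ) ≤ (max 1 (σ - 1/2))^2 := by nlinarith
        have h2P : 2*|t| ≤ 1 + t^2 := by nlinarith [sq_nonneg (1-|t|), _root_.sq_abs t]
        nlinarith [_root_.sq_abs t, mul_le_mul_of_nonneg_right ha2 (sq_nonneg t),
          mul_le_mul_of_nonneg_right hM2 (sq_nonneg (σ - 1/2)),
          mul_le_mul_of_nonneg_right h2P (sq_nonneg (σ - 1/2))]
      have hkey2 : 2 * Real.log (1 + |t|) - Real.log (2 * (max 1 (σ - 1/2)) ^ 2)
          ≤ Real.log ((σ - 1/2) ^ 2 + t ^ 2) - 2 * Real.log (σ - 1/2) := by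
        have : Real.log ((1 + |t|)^2 / (2 * (max 1 (σ - 1/2)) ^ 2))
            = 2 * Real.log (1 + |t|) - Real.log (2 * (max 1 (σ - 1/2)) ^ 2) := by
          rw [Real.log_div (by positivity) (by positivity), Real.log_pow]
          push_cast; ring
        linarith [hkey, this.symm.le]
      unfold FF
      have hmul := mul_le_mul_of_nonneg_left hkey2 ha.le
      linarith [harct, hmul]
    have h2a : (2 * σ - 1) * Real.log (1 + |t|) = 2 * (σ - 1/2) * Real.log (1 + |t|) := by ring
    rw [h2a]
    linarith

lemma gamma_lower_one {σ : ℝ} (hσ : 1 ≤ σ) :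
    ∃ c : ℝ, 0 < c ∧ ∀ t : ℝ,
      c * (1 + |t|) ^ (σ - 1/2) * Real.exp (-(π * |t|) / 2)
        ≤ ‖Complex.Gamma ((σ : ℂ) + t * Complex.I)‖ := by
  have hσ0 : (0:ℝ) < σ := by linarith
  set Cσ : ℝ := (σ - 1/2) * Real.log (2 * (max 1 (σ - 1/2)) ^ 2) with hCσ
  refine ⟨Real.Gamma σ * Real.exp (-Cσ/2), by positivity, fun t => ?_⟩
  set s : ℂ := (σ : ℂ) + t * Complex.I with hs
  have hsre : s.re = σ := by simp [hs]
  have hsim : s.im = t := by simp [hs]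
  have hsne : s ≠ 0 := fun h => by rw [h] at hsre; simp at hsre; linarith
  set Sb : ℝ := π * |t| - (2 * σ - 1) * Real.log (1 + |t|) + Cσ with hSb
  set E : ℝ := Real.exp (-Sb/2) with hE
  -- key inequality for every n
  have key : ∀ n : ℕ, ‖Complex.GammaSeq (σ : ℂ) n‖ * E ≤ ‖Complex.GammaSeq s n‖ := by
    intro n
    rcases Nat.eq_zero_or_pos n with rfl | hn
    · have h1 : Complex.GammaSeq s 0 = 0 := by
        simp [Complex.GammaSeq, Complex.zero_cpow hsne]
      have h2 : Complex.GammaSeq (σ : ℂ) 0 = 0 := by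
        have : (σ:ℂ) ≠ 0 := by
          simpa using Complex.ofReal_ne_zero.mpr hσ0.ne'
        simp [Complex.GammaSeq, Complex.zero_cpow this]
      simp [h1, h2]
    · -- n ≥ 1
      have hfac : ∀ j : ℕ, ‖s + (j:ℂ)‖ = (σ + j) * Real.exp (ff t (σ + j) / 2) := by
        intro j
        have hm : (0:ℝ) < σ + j := by positivity
        have hexp : Real.exp (ff t (σ + j)) = ((σ + j)^2 + t^2) / (σ + j)^2 := by
          unfold ff
          rw [show (2:ℝ) * Real.log (σ + j) = Real.log ((σ + j)^2) by
            rw [Real.log_pow]; push_cast; ring]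
          rw [← Real.log_div (by positivity) (by positivity)]
          exact Real.exp_log (by positivity)
        have habs : ‖s + (j:ℂ)‖ = Real.sqrt ((σ + j)^2 + t^2) := by
          rw [Complex.norm_def, Complex.normSq_apply]
          have hre : (s + (j:ℂ)).re = σ + j := by simp [hs]
          have him : (s + (j:ℂ)).im = t := by simp [hs]
          rw [hre, him]
          ring_nf
        rw [habs]
        have hsq : (σ + j)^2 + t^2 = ((σ + j) * Real.exp (ff t (σ + j) / 2))^2 := by
          have : Real.exp (ff t (σ + j) / 2) ^ 2 = Real.exp (ff t (σ + j)) := by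
            rw [← Real.exp_nat_mul]
            congr 1
            push_cast
            ring
          rw [mul_pow, this, hexp]
          field_simp
        rw [hsq, Real.sqrt_sq (by positivity)]
      have hprod : ∏ j ∈ Finset.range (n + 1), ‖s + (j:ℂ)‖
          = (∏ j ∈ Finset.range (n + 1), (σ + j)) *
            Real.exp ((∑ j ∈ Finset.range (n + 1), ff t (σ + j)) / 2) := by
        calc ∏ j ∈ Finset.range (n + 1), ‖s + (j:ℂ)‖
            = ∏ j ∈ Finset.range (n + 1), ((σ + j) * Real.exp (ff t (σ + j) / 2)) := by
              exact Finset.prod_congr rfl fun j _ => hfac j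
          _ = (∏ j ∈ Finset.range (n + 1), (σ + j)) *
              ∏ j ∈ Finset.range (n + 1), Real.exp (ff t (σ + j) / 2) :=
              Finset.prod_mul_distrib
          _ = _ := by
              rw [← Real.exp_sum, Finset.sum_div]
      have hP : (0:ℝ) < ∏ j ∈ Finset.range (n + 1), (σ + j) :=
        Finset.prod_pos fun j _ => by positivity
      have hnormS : ‖Complex.GammaSeq s n‖
          = (n:ℝ) ^ (σ:ℝ) * (Nat.factorial n : ℝ) / ((∏ j ∈ Finset.range (n + 1), (σ + j)) *
            Real.exp ((∑ j ∈ Finset.range (n + 1), ff t (σ + j)) / 2)) := by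
        rw [Complex.GammaSeq]
        rw [norm_div, norm_mul, ← hprod]
        congr 1
        · congr 1
          · rw [show ((n:ℂ)) = (((n:ℝ)):ℂ) by push_cast; rfl]
            rw [Complex.norm_cpow_eq_rpow_re_of_pos (by exact_mod_cast hn), hsre]
          · simp
        · rw [norm_prod]
      have hnormR : ‖Complex.GammaSeq (σ:ℂ) n‖
          = (n:ℝ) ^ (σ:ℝ) * (Nat.factorial n : ℝ) / (∏ j ∈ Finset.range (n + 1), (σ + j)) := by
        rw [Complex.GammaSeq]
        rw [norm_div, norm_mul]
        congr 1
        · congr 1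
          · rw [show ((n:ℂ)) = (((n:ℝ)):ℂ) by push_cast; rfl]
            rw [Complex.norm_cpow_eq_rpow_re_of_pos (by exact_mod_cast hn)]
            simp
          · simp
        · rw [norm_prod]
          rw [show (∏ j ∈ Finset.range (n + 1), (σ + j))
            = ∏ j ∈ Finset.range (n + 1), ‖(σ:ℂ) + (j:ℂ)‖ from
            Finset.prod_congr rfl fun j _ => by
              rw [show ((σ:ℂ) + (j:ℂ)) = (((σ + j : ℝ)):ℂ) by push_cast; rfl]
              rw [Complex.norm_real, Real.norm_eq_abs, abs_of_pos (by positivity)]]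
      rw [hnormS, hnormR]
      have hSn := sum_ff_bound hσ t n
      have hEe : E ≤ Real.exp (-(∑ j ∈ Finset.range (n + 1), ff t (σ + j)) / 2) := by
        rw [hE]
        apply Real.exp_le_exp.mpr
        rw [hSb]
        linarith
      calc (n:ℝ) ^ σ * (Nat.factorial n : ℝ) / (∏ j ∈ Finset.range (n + 1), (σ + j)) * E
          ≤ (n:ℝ) ^ σ * (Nat.factorial n : ℝ) / (∏ j ∈ Finset.range (n + 1), (σ + j)) *
            Real.exp (-(∑ j ∈ Finset.range (n + 1), ff t (σ + j)) / 2) :=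
            mul_le_mul_of_nonneg_left hEe (by positivity)
        _ = _ := by
            rw [neg_div, Real.exp_neg]
            ring
  have h1 : Filter.Tendsto (fun n => ‖Complex.GammaSeq s n‖) Filter.atTop
      (nhds ‖Complex.Gamma s‖) := (Complex.GammaSeq_tendsto_Gamma s).norm
  have h2 : Filter.Tendsto (fun n => ‖Complex.GammaSeq (σ:ℂ) n‖ * E) Filter.atTop
      (nhds (‖Complex.Gamma (σ:ℂ)‖ * E)) :=
    ((Complex.GammaSeq_tendsto_Gamma (σ:ℂ)).norm).mul_const E
  have hle : ‖Complex.Gamma (σ:ℂ)‖ * E ≤ ‖Complex.Gamma s‖ :=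
    le_of_tendsto_of_tendsto' h2 h1 key
  have hG : ‖Complex.Gamma (σ:ℂ)‖ = Real.Gamma σ := by
    rw [Complex.Gamma_ofReal, Complex.norm_real, Real.norm_eq_abs,
      abs_of_pos (Real.Gamma_pos_of_pos hσ0)]
  rw [hG] at hle
  refine le_trans (le_of_eq ?_) hle
  rw [hE]
  have hsplit : -Sb/2 = -Cσ/2 + Real.log (1+|t|) * (σ - 1/2) + -(π*|t|)/2 := by
    rw [hSb]; ring
  rw [hsplit, Real.exp_add, Real.exp_add]
  rw [show (1 + |t|) ^ (σ - 1/2) = Real.exp (Real.log (1+|t|) * (σ - 1/2)) from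
    Real.rpow_def_of_pos (by positivity) _]
  ring

lemma gamma_lower {σ : ℝ} (hσ0 : 0 < σ) :
    ∃ c : ℝ, 0 < c ∧ ∀ t : ℝ,
      c * (1 + |t|) ^ (σ - 1/2) * Real.exp (-(π * |t|) / 2)
        ≤ ‖Complex.Gamma ((σ : ℂ) + t * Complex.I)‖ := by
  rcases le_or_gt 1 σ with h1 | h1
  · exact gamma_lower_one h1
  · obtain ⟨c, hc, h⟩ := gamma_lower_one (σ := σ + 1) (by linarith)
    refine ⟨c, hc, fun t => ?_⟩
    set s : ℂ := (σ:ℂ) + t * Complex.I with hs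
    have hsre : s.re = σ := by simp [hs]
    have hsne : s ≠ 0 := fun hh => by rw [hh] at hsre; simp at hsre; linarith
    have hrec : Complex.Gamma (s + 1) = s * Complex.Gamma s := Complex.Gamma_add_one s hsne
    have hsn : ‖s‖ ≤ 1 + |t| := by
      calc ‖s‖ ≤ ‖(σ:ℂ)‖ + ‖(t:ℂ) * Complex.I‖ := norm_add_le _ _
        _ = σ + |t| := by
            rw [norm_mul]
            simp [Complex.norm_real, Complex.norm_I, Real.norm_eq_abs, abs_of_pos hσ0]
        _ ≤ 1 + |t| := by linarith
    have heq : ((σ + 1 : ℝ):ℂ) + t * Complex.I = s + 1 := by rw [hs]; push_cast; ring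
    have hpos : (0:ℝ) < 1 + |t| := by positivity
    have hG1 := h t
    rw [heq, hrec, norm_mul] at hG1
    have hrpow : (1 + |t|) ^ (σ + 1 - 1/2) = (1 + |t|) ^ (σ - 1/2) * (1 + |t|) := by
      rw [show σ + 1 - 1/2 = (σ - 1/2) + 1 by ring, Real.rpow_add (by positivity), Real.rpow_one]
    rw [hrpow] at hG1
    have h2 : (c * (1+|t|)^(σ-1/2) * Real.exp (-(π*|t|)/2)) * (1+|t|)
        ≤ ‖Complex.Gamma s‖ * (1+|t|) := by
      calc (c * (1+|t|)^(σ-1/2) * Real.exp (-(π*|t|)/2)) * (1+|t|)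
          = c * ((1+|t|)^(σ-1/2) * (1+|t|)) * Real.exp (-(π*|t|)/2) := by ring
        _ ≤ ‖s‖ * ‖Complex.Gamma s‖ := hG1
        _ ≤ (1+|t|) * ‖Complex.Gamma s‖ := mul_le_mul_of_nonneg_right hsn (norm_nonneg _)
        _ = ‖Complex.Gamma s‖ * (1+|t|) := by ring
    exact le_of_mul_le_mul_right h2 hpos

lemma gamma_lower_v {A : ℝ} (hA : -(1/2:ℝ) < A) :
    ∃ c : ℝ, 0 < c ∧ ∀ v : ℝ,
      c * (1 + |v|) ^ A * Real.exp (-(π * |v|))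
        ≤ ‖Complex.Gamma ((A:ℂ) + 2*v*Complex.I + 1/2)‖ := by
  have hσ : (0:ℝ) < A + 1/2 := by linarith
  obtain ⟨c, hc, h⟩ := gamma_lower hσ
  have hmin : (0:ℝ) < min 1 ((2:ℝ)^A) := lt_min one_pos (Real.rpow_pos_of_pos two_pos A)
  refine ⟨c * min 1 ((2:ℝ)^A), mul_pos hc hmin, fun v => ?_⟩
  have h2 := h (2*v)
  have heq : ((A + 1/2 : ℝ):ℂ) + (2*v:ℝ) * Complex.I = (A:ℂ) + 2*v*Complex.I + 1/2 := by
    push_cast; ring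
  rw [heq] at h2
  have habs : |2*v| = 2*|v| := by rw [abs_mul]; norm_num
  have hexp : Real.exp (-(π * |2*v|)/2) = Real.exp (-(π*|v|)) := by rw [habs]; congr 1; ring
  have hA12 : A + 1/2 - 1/2 = A := by ring
  rw [hexp, hA12, habs] at h2
  refine le_trans ?_ h2
  have hbase : min 1 ((2:ℝ)^A) * (1+|v|)^A ≤ (1 + 2*|v|)^A := by
    rcases le_or_gt 0 A with hA0 | hA0
    · have hmono : (1+|v|)^A ≤ (1+2*|v|)^A :=
        Real.rpow_le_rpow (by positivity) (by linarith [abs_nonneg v]) hA0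
      calc min 1 ((2:ℝ)^A) * (1+|v|)^A
          ≤ 1 * (1+|v|)^A := mul_le_mul_of_nonneg_right (min_le_left _ _) (by positivity)
        _ = (1+|v|)^A := one_mul _
        _ ≤ _ := hmono
    · calc min 1 ((2:ℝ)^A) * (1+|v|)^A
          ≤ (2:ℝ)^A * (1+|v|)^A :=
            mul_le_mul_of_nonneg_right (min_le_right _ _) (by positivity)
        _ = (2*(1+|v|))^A := (Real.mul_rpow (by norm_num) (by positivity)).symm
        _ ≤ (1+2*|v|)^A :=
            Real.rpow_le_rpow_of_nonpos (by positivity) (by linarith [abs_nonneg v]) hA0.le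
  calc c * min 1 ((2:ℝ)^A) * (1+|v|)^A * Real.exp (-(π*|v|))
      = (min 1 ((2:ℝ)^A) * (1+|v|)^A) * (c * Real.exp (-(π*|v|))) := by ring
    _ ≤ (1+2*|v|)^A * (c * Real.exp (-(π*|v|))) :=
        mul_le_mul_of_nonneg_right hbase (by positivity)
    _ = c * (1+2*|v|)^A * Real.exp (-(π*|v|)) := by ring

lemma bessel_integrand_bound {A : ℝ} (hA : -(1/2:ℝ) < A) {ν : ℂ} (hν : ν.re = A) (y : ℝ) :
    ∀ θ ∈ Set.Icc (0:ℝ) (π/2),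
      ‖((Real.sin θ : ℂ)) ^ (2*ν) * (Real.cos (y * Real.cos θ) : ℂ)‖
        ≤ max 1 ((2/π)^(2*A)) * θ ^ (2*A) := by
  intro θ hθ
  set K := max 1 ((2/π)^(2*A)) with hK
  have hK1 : (1:ℝ) ≤ K := le_max_left _ _
  have h2re : (2*ν).re = 2*A := by simp [Complex.mul_re, hν]
  rw [norm_mul]
  have hcos : ‖(Real.cos (y * Real.cos θ) : ℂ)‖ ≤ 1 := by
    rw [Complex.norm_real, Real.norm_eq_abs]
    exact Real.abs_cos_le_one _
  have hmain : ‖((Real.sin θ : ℂ)) ^ (2*ν)‖ ≤ K * θ ^ (2*A) := by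
    rcases eq_or_lt_of_le hθ.1 with h0 | h0
    · -- θ = 0
      rw [← h0]
      rcases eq_or_ne (2*ν) 0 with hν0 | hν0
      · have h20 : (2:ℝ) * A = 0 := by
          have h := congrArg Complex.re hν0
          rw [h2re] at h
          simpa using h
        rw [hν0, Complex.cpow_zero, h20, Real.rpow_zero]
        simpa using hK1
      · rw [show ((Real.sin 0 : ℝ):ℂ) = 0 by norm_num]
        rw [Complex.zero_cpow hν0]
        simp
        positivity
    · -- θ > 0
      have hθπ : θ < π := lt_of_le_of_lt hθ.2 (by linarith [Real.pi_pos])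
      have hsin : 0 < Real.sin θ := Real.sin_pos_of_pos_of_lt_pi h0 hθπ
      rw [Complex.norm_cpow_eq_rpow_re_of_pos hsin, h2re]
      rcases le_or_gt 0 (2*A) with hA0 | hA0
      · calc Real.sin θ ^ (2*A) ≤ θ ^ (2*A) :=
              Real.rpow_le_rpow hsin.le (Real.sin_le hθ.1) hA0
          _ ≤ K * θ ^ (2*A) := by
              nlinarith [Real.rpow_nonneg hθ.1 (2*A)]
      · have hjordan : 2/π * θ ≤ Real.sin θ := Real.mul_le_sin hθ.1 hθ.2
        have h2π : (0:ℝ) < 2/π := by positivity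
        calc Real.sin θ ^ (2*A) ≤ (2/π * θ) ^ (2*A) :=
              Real.rpow_le_rpow_of_nonpos (by positivity) hjordan hA0.le
          _ = (2/π)^(2*A) * θ ^ (2*A) := Real.mul_rpow h2π.le hθ.1
          _ ≤ K * θ ^ (2*A) := by
              apply mul_le_mul_of_nonneg_right (le_max_right _ _)
                (Real.rpow_nonneg hθ.1 _)
  calc ‖((Real.sin θ : ℂ)) ^ (2*ν)‖ * ‖(Real.cos (y * Real.cos θ) : ℂ)‖
      ≤ (K * θ ^ (2*A)) * 1 :=
        mul_le_mul hmain hcos (norm_nonneg _)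
          (mul_nonneg (by linarith) (Real.rpow_nonneg hθ.1 _))
    _ = K * θ ^ (2*A) := mul_one _

lemma bessel_integral_bound {A : ℝ} (hA : -(1/2:ℝ) < A) :
    ∃ CI : ℝ, 0 ≤ CI ∧ ∀ (y : ℝ) (ν : ℂ), ν.re = A →
      ‖∫ θ in (0:ℝ)..(π/2), ((Real.sin θ : ℂ)) ^ (2*ν) * (Real.cos (y * Real.cos θ) : ℂ)‖
        ≤ CI := by
  set K := max 1 ((2/π)^(2*A)) with hK
  have hK1 : (1:ℝ) ≤ K := le_max_left _ _
  set g : ℝ → ℝ := fun θ => K * θ ^ (2*A) with hg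
  have hg_int : IntervalIntegrable g MeasureTheory.volume 0 (π/2) :=
    (intervalIntegral.intervalIntegrable_rpow' (by linarith)).const_mul K
  refine ⟨∫ θ in (0:ℝ)..(π/2), g θ, ?_, ?_⟩
  · apply intervalIntegral.integral_nonneg (by positivity)
    intro u hu
    exact mul_nonneg (by linarith) (Real.rpow_nonneg hu.1 _)
  · intro y ν hν
    set f : ℝ → ℂ := fun θ => ((Real.sin θ : ℂ)) ^ (2*ν) * (Real.cos (y * Real.cos θ) : ℂ) with hf
    have hb := bessel_integrand_bound hA hν y
    have huIoc : Set.uIoc (0:ℝ) (π/2) = Set.Ioc (0:ℝ) (π/2) :=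
      Set.uIoc_of_le (by positivity)
    have hmeas : MeasureTheory.AEStronglyMeasurable f
        (MeasureTheory.volume.restrict (Set.uIoc (0:ℝ) (π/2))) := by
      rw [huIoc]
      apply ContinuousOn.aestronglyMeasurable _ measurableSet_Ioc
      intro θ hθ
      have hθπ : θ < π := lt_of_le_of_lt hθ.2 (by linarith [Real.pi_pos])
      have hsin : 0 < Real.sin θ := Real.sin_pos_of_pos_of_lt_pi hθ.1 hθπ
      apply ContinuousWithinAt.mul
      · apply ContinuousAt.continuousWithinAt
        exact ContinuousAt.comp
          (Complex.continuousAt_ofReal_cpow_const _ _ (Or.inr hsin.ne'))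
          Real.continuous_sin.continuousAt
      · apply Continuous.continuousWithinAt
        exact Complex.continuous_ofReal.comp (Real.continuous_cos.comp
          (continuous_const.mul Real.continuous_cos))
    have hf_int : IntervalIntegrable f MeasureTheory.volume 0 (π/2) := by
      apply hg_int.mono_fun hmeas
      rw [huIoc]
      filter_upwards [MeasureTheory.ae_restrict_mem measurableSet_Ioc] with θ hθ
      have := hb θ (Set.Ioc_subset_Icc_self hθ)
      calc ‖f θ‖ ≤ K * θ ^ (2*A) := this
        _ ≤ |K * θ ^ (2*A)| := le_abs_self _
        _ = ‖g θ‖ := by rw [Real.norm_eq_abs]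
    calc ‖∫ θ in (0:ℝ)..(π/2), f θ‖
        ≤ ∫ θ in (0:ℝ)..(π/2), ‖f θ‖ :=
          intervalIntegral.norm_integral_le_integral_norm (by positivity)
      _ ≤ ∫ θ in (0:ℝ)..(π/2), g θ := by
          apply intervalIntegral.integral_mono_on (by positivity) hf_int.norm hg_int
          intro θ hθ
          exact hb θ hθ

end helpers


/-- For `A = Re ν > −1/2`: `J_{A+2iv}(y) ≪_A (y/(1+|v|))^A exp(π|v|)` for all `y > 0`, `v ∈ ℝ`. -/
theorem besselJ_complex_order_bound (A : ℝ) (hA : -(1 / 2 : ℝ) < A) :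
    ∃ C : ℝ, 0 < C ∧ ∀ (y : ℝ), 0 < y → ∀ v : ℝ,
      ‖besselJ ((A : ℂ) + 2 * v * Complex.I) y‖
        ≤ C * (y / (1 + |v|)) ^ A * Real.exp (Real.pi * |v|) := by
  obtain ⟨CI, hCI0, hCI⟩ := bessel_integral_bound hA
  obtain ⟨c, hc, hΓ⟩ := gamma_lower_v hA
  refine ⟨max 1 (2 * CI / (Real.sqrt π * c * (2:ℝ)^A)),
    lt_of_lt_of_le one_pos (le_max_left _ _), fun y hy v => ?_⟩
  have hy2 : (0:ℝ) < y/2 := by linarith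
  have hΓv := hΓ v
  have hΓpos : (0:ℝ) < ‖Complex.Gamma ((A:ℂ) + 2*v*Complex.I + 1/2)‖ :=
    lt_of_lt_of_le (by positivity) hΓv
  have e2 : ‖(2:ℂ)‖ = 2 := by norm_num
  have ew : ‖(((y/2:ℝ)):ℂ) ^ ((A:ℂ) + 2*v*Complex.I)‖ = (y/2)^A := by
    rw [Complex.norm_cpow_eq_rpow_re_of_pos hy2]
    norm_num
  have eΓ : ‖Complex.Gamma (1/2 : ℂ)‖ = Real.sqrt π := by
    rw [Complex.Gamma_one_half_eq, 
      Complex.norm_cpow_eq_rpow_re_of_pos Real.pi_pos, Real.sqrt_eq_rpow]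
    norm_num
  have key1 : ‖besselJ ((A : ℂ) + 2 * v * Complex.I) y‖
      = 2 * (y/2) ^ A / (‖Complex.Gamma ((A:ℂ) + 2*v*Complex.I + 1/2)‖ * Real.sqrt π) *
        ‖∫ θ in (0:ℝ)..(π/2), ((Real.sin θ:ℂ)) ^ (2*((A:ℂ) + 2*v*Complex.I)) *
          ((Real.cos (y*Real.cos θ):ℂ))‖ := by
    unfold besselJ
    rw [norm_mul, norm_div, norm_mul, norm_mul, e2, ew, eΓ]
  have hInt := hCI y ((A:ℂ) + 2*v*Complex.I) (by simp)
  have hmul : c * (1+|v|)^A * Real.exp (-(π*|v|)) * Real.sqrt π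
      ≤ ‖Complex.Gamma ((A:ℂ) + 2*v*Complex.I + 1/2)‖ * Real.sqrt π :=
    mul_le_mul_of_nonneg_right hΓv (Real.sqrt_nonneg _)
  have h2 : 2 * (y/2)^A / (‖Complex.Gamma ((A:ℂ) + 2*v*Complex.I + 1/2)‖ * Real.sqrt π)
      ≤ 2 * (y/2)^A / (c * (1+|v|)^A * Real.exp (-(π*|v|)) * Real.sqrt π) :=
    div_le_div_of_nonneg_left (by positivity) (by positivity) hmul
  have h3 : ‖besselJ ((A : ℂ) + 2 * v * Complex.I) y‖
      ≤ (2 * (y/2)^A / (c * (1+|v|)^A * Real.exp (-(π*|v|)) * Real.sqrt π)) * CI := by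
    rw [key1]
    exact mul_le_mul h2 hInt (norm_nonneg _) (by positivity)
  refine le_trans h3 ?_
  have heq : (2 * (y/2)^A / (c * (1+|v|)^A * Real.exp (-(π*|v|)) * Real.sqrt π)) * CI
      = (2 * CI / (Real.sqrt π * c * (2:ℝ)^A)) * (y/(1+|v|))^A * Real.exp (π*|v|) := by
    rw [Real.exp_neg, Real.div_rpow hy.le (by norm_num : (0:ℝ) ≤ 2),
        Real.div_rpow hy.le (by positivity : (0:ℝ) ≤ 1+|v|)]
    have h1p : ((1:ℝ)+|v|)^A ≠ 0 := ne_of_gt (Real.rpow_pos_of_pos (by positivity) _)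
    have h2p : ((2:ℝ))^A ≠ 0 := ne_of_gt (Real.rpow_pos_of_pos two_pos _)
    have hsp : Real.sqrt π ≠ 0 := ne_of_gt (Real.sqrt_pos.mpr Real.pi_pos)
    have hep : Real.exp (π*|v|) ≠ 0 := Real.exp_ne_zero _
    field_simp
  rw [heq]
  exact mul_le_mul_of_nonneg_right (mul_le_mul_of_nonneg_right
    (le_max_right 1 _) (Real.rpow_nonneg (by positivity) _)) (Real.exp_pos _).le
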